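/- Let Φ : I → ℝ be a convex function on an interval I of positive real numbers, let T, V be bounded linear invertible operators on a complex Hilbert space H, and let 0 < m < M with [m², M²] contained in the interior of I and m‖Tx‖ ≤ ‖Vx‖ ≤ M‖Tx‖ for all x ∈ H. Then for every subgradient selection φ of Φ and every x ∈ H with x ≠ 0, writing r := ‖Vx‖²/‖Tx‖², one has ⊙_Φ(V,T) ≥ Φ(r)|T|² + φ(r)(|V|² − r|T|²) in the operator order. -/

import Mathlib

/-
Write `X = |V T⁻¹|²`. The bounds `m‖Tx‖ ≤ ‖Vx‖ ≤ M‖Tx‖` say that `m² ≤ X ≤ M²` in the Loewner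
order, so the spectrum of `X` lies in `[m², M²] ⊆ interior I`, where `Φ` is continuous and lies
above its supporting line `t ↦ Φ r + (t - r) φ r` at `r`. The continuous functional calculus is
monotone, so `X` may be substituted for `t` in this inequality; conjugating by `T` then turns
`X` into `|V|²` and `1` into `|T|²`.
-/

variable {H : Type*} [NormedAddCommGroup H] [InnerProductSpace ℂ H] [CompleteSpace H]

/-- `X = |VT⁻¹|² = (T*)⁻¹ V* V T⁻¹`. -/
noncomputable def qX (V T : (H →L[ℂ] H)ˣ) : H →L[ℂ] H :=
  star (↑(T⁻¹) : H →L[ℂ] H) * (star (V : H →L[ℂ] H) * (V : H →L[ℂ] H)) * (↑(T⁻¹) : H →L[ℂ] H)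

/-- The quadratic operator perspective `⊙_Φ(V,T) = T* Φ(X) T`. -/
noncomputable def qPersp (Φ : ℝ → ℝ) (V T : (H →L[ℂ] H)ˣ) : H →L[ℂ] H :=
  star (T : H →L[ℂ] H) * cfc Φ (qX V T) * (T : H →L[ℂ] H)

/-- `|T|² = T*T`. -/
noncomputable def modSq (T : (H →L[ℂ] H)ˣ) : H →L[ℂ] H :=
  star (T : H →L[ℂ] H) * (T : H →L[ℂ] H)

namespace ContinuousLinearMap

section Loewner

variable {E : Type*} [NormedAddCommGroup E] [InnerProductSpace ℂ E]

lemma reApplyInnerSelf_algebraMap (c : ℝ) (y : E) :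
    reApplyInnerSelf (algebraMap ℝ (E →L[ℂ] E) c) y = c * ‖y‖ ^ 2 := by
  rw [reApplyInnerSelf_apply, Algebra.algebraMap_eq_smul_one, smul_apply, one_apply_eq_self,
    ← Complex.coe_smul, inner_smul_left, inner_self_eq_norm_sq_to_K]
  simp [← Complex.ofReal_pow]

lemma reApplyInnerSelf_sub (A B : E →L[ℂ] E) (y : E) :
    reApplyInnerSelf (A - B) y = reApplyInnerSelf A y - reApplyInnerSelf B y := by
  simp only [reApplyInnerSelf_apply, sub_apply, inner_sub_left, map_sub]

variable [CompleteSpace E]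

lemma reApplyInnerSelf_star_mul_self (B : E →L[ℂ] E) (y : E) :
    reApplyInnerSelf (star B * B) y = ‖B y‖ ^ 2 := by
  rw [reApplyInnerSelf_apply, star_eq_adjoint, apply_norm_sq_eq_inner_adjoint_left]
  rfl

lemma algebraMap_le_iff_forall_mul_norm_sq_le {A : E →L[ℂ] E} (hA : IsSelfAdjoint A) (c : ℝ) :
    algebraMap ℝ (E →L[ℂ] E) c ≤ A ↔ ∀ y, c * ‖y‖ ^ 2 ≤ reApplyInnerSelf A y := by
  simp only [le_def, isPositive_def', hA.sub ((IsSelfAdjoint.all c).algebraMap _), true_and,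
    reApplyInnerSelf_sub, reApplyInnerSelf_algebraMap, sub_nonneg]

lemma le_algebraMap_iff_forall_le_mul_norm_sq {A : E →L[ℂ] E} (hA : IsSelfAdjoint A) (c : ℝ) :
    A ≤ algebraMap ℝ (E →L[ℂ] E) c ↔ ∀ y, reApplyInnerSelf A y ≤ c * ‖y‖ ^ 2 := by
  simp only [le_def, isPositive_def', ((IsSelfAdjoint.all c).algebraMap _).sub hA, true_and,
    reApplyInnerSelf_sub, reApplyInnerSelf_algebraMap, sub_nonneg]

lemma spectrum_star_mul_self_subset_Icc (B : E →L[ℂ] E) {m M : ℝ} (hm : 0 ≤ m)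
    (hB : ∀ y, m * ‖y‖ ≤ ‖B y‖ ∧ ‖B y‖ ≤ M * ‖y‖) :
    spectrum ℝ (star B * B) ⊆ Set.Icc (m ^ 2) (M ^ 2) := by
  have hsa : IsSelfAdjoint (star B * B) := .star_mul_self B
  have hlow : algebraMap ℝ (E →L[ℂ] E) (m ^ 2) ≤ star B * B := by
    refine (algebraMap_le_iff_forall_mul_norm_sq_le hsa _).2 fun y => ?_
    rw [reApplyInnerSelf_star_mul_self, ← mul_pow]
    exact pow_le_pow_left₀ (by positivity) (hB y).1 2
  have hup : star B * B ≤ algebraMap ℝ (E →L[ℂ] E) (M ^ 2) := by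
    refine (le_algebraMap_iff_forall_le_mul_norm_sq hsa _).2 fun y => ?_
    rw [reApplyInnerSelf_star_mul_self, ← mul_pow]
    exact pow_le_pow_left₀ (norm_nonneg _) (hB y).2 2
  exact fun t ht => ⟨(algebraMap_le_iff_le_spectrum hsa).1 hlow t ht,
    (le_algebraMap_iff_spectrum_le hsa).1 hup t ht⟩

end Loewner

end ContinuousLinearMap

section Subgradient

variable {A : Type*} [TopologicalSpace A] [Ring A] [StarRing A] [PartialOrder A]
  [StarOrderedRing A] [Algebra ℝ A] [ContinuousFunctionalCalculus ℝ A IsSelfAdjoint]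

lemma algebraMap_add_smul_le_cfc_of_forall_le {X : A} (hX : IsSelfAdjoint X) {Φ : ℝ → ℝ}
    (hΦ : ContinuousOn Φ (spectrum ℝ X)) {a s : ℝ}
    (h : ∀ t ∈ spectrum ℝ X, Φ a + (t - a) * s ≤ Φ t) :
    algebraMap ℝ A (Φ a - a * s) + s • X ≤ cfc Φ X :=
  calc algebraMap ℝ A (Φ a - a * s) + s • X = cfc (fun t => (Φ a - a * s) + s * t) X := by
        rw [cfc_const_add _ _ _, cfc_const_mul_id _ _]
    _ ≤ cfc Φ X := cfc_mono fun t ht => by linarith [h t ht]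

end Subgradient

lemma sq_div_sq_mem_Icc {a b m M : ℝ} (hm : 0 ≤ m) (hb : 0 < b) (hmab : m * b ≤ a)
    (haMb : a ≤ M * b) : a ^ 2 / b ^ 2 ∈ Set.Icc (m ^ 2) (M ^ 2) := by
  rw [Set.mem_Icc, le_div_iff₀ (by positivity), div_le_iff₀ (by positivity), ← mul_pow, ← mul_pow]
  have hmb : 0 ≤ m * b := mul_nonneg hm hb.le
  exact ⟨pow_le_pow_left₀ hmb hmab 2, pow_le_pow_left₀ (hmb.trans hmab) haMb 2⟩

section Perspective

variable (V T : (H →L[ℂ] H)ˣ)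

lemma qX_eq_star_mul_self :
    qX V T = star ((V : H →L[ℂ] H) * ↑T⁻¹) * ((V : H →L[ℂ] H) * ↑T⁻¹) := by
  simp only [qX, star_mul, mul_assoc]

lemma isSelfAdjoint_qX : IsSelfAdjoint (qX V T) :=
  qX_eq_star_mul_self V T ▸ .star_mul_self _

lemma star_mul_qX_mul : star (T : H →L[ℂ] H) * qX V T * T = modSq V := by
  calc star (T : H →L[ℂ] H) * qX V T * T
      = star ((T⁻¹ * T : (H →L[ℂ] H)ˣ) : H →L[ℂ] H) * modSq V * ((T⁻¹ * T : (H →L[ℂ] H)ˣ)) := by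
        simp only [qX, modSq, Units.val_mul, star_mul, mul_assoc]
    _ = modSq V := by simp

lemma star_mul_affine_qX_mul (c s : ℝ) :
    star (T : H →L[ℂ] H) * (algebraMap ℝ (H →L[ℂ] H) c + s • qX V T) * T
      = c • modSq T + s • modSq V := by
  rw [mul_add, add_mul, mul_smul_comm, smul_mul_assoc, star_mul_qX_mul,
    Algebra.algebraMap_eq_smul_one, mul_smul_comm, smul_mul_assoc, mul_one]
  rfl

lemma spectrum_qX_subset_Icc {m M : ℝ} (hm : 0 ≤ m)
    (hTV : ∀ x : H, m * ‖(T : H →L[ℂ] H) x‖ ≤ ‖(V : H →L[ℂ] H) x‖ ∧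
      ‖(V : H →L[ℂ] H) x‖ ≤ M * ‖(T : H →L[ℂ] H) x‖) :
    spectrum ℝ (qX V T) ⊆ Set.Icc (m ^ 2) (M ^ 2) := by
  rw [qX_eq_star_mul_self]
  refine ContinuousLinearMap.spectrum_star_mul_self_subset_Icc _ hm fun y => ?_
  set y' := (↑T⁻¹ : H →L[ℂ] H) y
  have hTy' : (T : H →L[ℂ] H) y' = y := by
    rw [← mul_apply_eq_comp, T.mul_inv, one_apply_eq_self]
  simpa [hTy'] using hTV y'

end Perspective

theorem stmt3_general (I : Set ℝ)
    (Φ : ℝ → ℝ) (hΦ : ConvexOn ℝ I Φ)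
    (T V : (H →L[ℂ] H)ˣ) (m M : ℝ) (hm : 0 < m)
    (hsub : Set.Icc (m ^ 2) (M ^ 2) ⊆ interior I)
    (hTV : ∀ x : H, m * ‖(T : H →L[ℂ] H) x‖ ≤ ‖(V : H →L[ℂ] H) x‖ ∧ ‖(V : H →L[ℂ] H) x‖ ≤ M * ‖(T : H →L[ℂ] H) x‖)
    (φ : ℝ → ℝ) (hφ : ∀ a ∈ interior I, ∀ t ∈ I, Φ a + (t - a) * φ a ≤ Φ t)
    (x : H) (hx : x ≠ 0) (r : ℝ) (hr : r = ‖(V : H →L[ℂ] H) x‖ ^ 2 / ‖(T : H →L[ℂ] H) x‖ ^ 2) :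
    Φ r • modSq T + φ r • (modSq V - r • modSq T) ≤ qPersp Φ V T := by
  have hspec := spectrum_qX_subset_Icc V T hm.le hTV
  have hTx : 0 < ‖(T : H →L[ℂ] H) x‖ :=
    norm_pos_iff.2 ((ContinuousLinearEquiv.unitsEquiv ℂ H T).map_ne_zero_iff.2 hx)
  have hrI : r ∈ interior I := hsub (hr ▸ sq_div_sq_mem_Icc hm.le hTx (hTV x).1 (hTV x).2)
  have hsupport := algebraMap_add_smul_le_cfc_of_forall_le (isSelfAdjoint_qX V T)
    (hΦ.continuousOn_interior.mono (hspec.trans hsub))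
    fun t ht => hφ r hrI t (interior_subset (hsub (hspec ht)))
  calc Φ r • modSq T + φ r • (modSq V - r • modSq T)
      = star (T : H →L[ℂ] H) * (algebraMap ℝ _ (Φ r - r * φ r) + φ r • qX V T) * T := by
        rw [star_mul_affine_qX_mul]
        module
    _ ≤ qPersp Φ V T := star_left_conjugate_le_conjugate hsupport _

theorem stmt3 (I : Set ℝ) (hIpos : I ⊆ Set.Ioi 0)
    (Φ : ℝ → ℝ) (hΦ : ConvexOn ℝ I Φ)
    (T V : (H →L[ℂ] H)ˣ) (m M : ℝ) (hm : 0 < m) (hmM : m < M)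
    (hsub : Set.Icc (m ^ 2) (M ^ 2) ⊆ interior I)
    (hTV : ∀ x : H, m * ‖(T : H →L[ℂ] H) x‖ ≤ ‖(V : H →L[ℂ] H) x‖ ∧ ‖(V : H →L[ℂ] H) x‖ ≤ M * ‖(T : H →L[ℂ] H) x‖)
    (φ : ℝ → ℝ) (hφ : ∀ a ∈ interior I, ∀ t ∈ I, Φ a + (t - a) * φ a ≤ Φ t)
    (x : H) (hx : x ≠ 0) (r : ℝ) (hr : r = ‖(V : H →L[ℂ] H) x‖ ^ 2 / ‖(T : H →L[ℂ] H) x‖ ^ 2) :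
    Φ r • modSq T + φ r • (modSq V - r • modSq T) ≤ qPersp Φ V T :=
  stmt3_general I Φ hΦ T V m M hm hsub hTV φ hφ x hx r hr
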